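/- arXiv:2312.17095 — 2 statements merged into one kernel-verified Lean document; each statement's English description precedes it below -/
import Mathlib

section
/- If A is a 1-tight and ¬-stable subset of X, then A is 0-tight; conversely, every 0-tight subset is ¬-stable. -/
universe u v

structure ExtIneq (X : Type u) where
  eq : X → X → Prop
  neq : X → X → Prop
  eq_refl : ∀ x, eq x x
  eq_symm : ∀ {x y}, eq x y → eq y x
  eq_trans : ∀ {x y z}, eq x y → eq y z → eq x z
  consistent : ∀ {x y}, eq x y → neq x y → False
  ext : ∀ {x x' y y'}, eq x x' → eq y y' → neq x y → neq x' y'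

/-- The extensional empty subset `∅_X := {x | x ≠_X x}`. -/
def emptySub {X : Type u} (S : ExtIneq X) : Set X := {x | S.neq x x}

/-- The `≠`-complement `A^{≠} := {x | ∀ a ∈ A, x ≠_X a}`. -/
def neqCompl {X : Type u} (S : ExtIneq X) (A : Set X) : Set X :=
  {x | ∀ a ∈ A, S.neq x a}

/-- The logical (weak) complement `A^c := {x | ∀ a ∈ A, ¬ (x =_X a)}`. -/
def logCompl {X : Type u} (S : ExtIneq X) (A : Set X) : Set X :=
  {x | ∀ a ∈ A, ¬ S.eq x a}

/-- Preimage `f⁻¹(C) := {x | ∃ y ∈ C, f x =_Y y}`. -/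
def preim {X : Type u} {Y : Type v} (SY : ExtIneq Y) (f : X → Y) (C : Set Y) : Set X :=
  {x | ∃ y ∈ C, SY.eq (f x) y}

/-- Direct image `f(A) := {y | ∃ a ∈ A, f a =_Y y}`. -/
def img {X : Type u} {Y : Type v} (SY : ExtIneq Y) (f : X → Y) (A : Set X) : Set Y :=
  {y | ∃ a ∈ A, SY.eq (f a) y}

theorem tightness_relations {X : Type u} (S : ExtIneq X) (A : Set X) :
    ((logCompl S A ⊆ neqCompl S A) → (logCompl S (logCompl S A) ⊆ A) →
      logCompl S (neqCompl S A) ⊆ A) ∧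
    ((logCompl S (neqCompl S A) ⊆ A) → logCompl S (logCompl S A) ⊆ A) := by
  constructor
  · intro h1 h2 x hx
    apply h2
    intro a ha
    exact hx a (h1 ha)
  · intro h0 x hx
    apply h0
    intro a ha
    exact hx a (fun b hb hab => S.consistent hab (ha b hb))
end

section
/- If f : X → Y is a strong injection (x ≠_X x' → f(x) ≠_Y f(x') and f(x) =_Y f(x') → x =_X x') between sets with extensional inequalities, then the complemented direct image f(A) := (f(A¹), f(A⁰)) of a complemented subset A is a complemented subset of Y, and f(A ∩ B) = f(A) ∩ f(B) for all complemented subsets A, B of X. -/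
universe u v

theorem img_complemented_inter {X : Type u} {Y : Type v}
    (SX : ExtIneq X) (SY : ExtIneq Y) (f : X → Y)
    (hinj : ∀ x x', SX.neq x x' → SY.neq (f x) (f x'))
    (hemb : ∀ x x', SY.eq (f x) (f x') → SX.eq x x')
    (A1 A0 B1 B0 : Set X)
    (hAdisj : ∀ a1 ∈ A1, ∀ a0 ∈ A0, SX.neq a1 a0)
    (hBdisj : ∀ b1 ∈ B1, ∀ b0 ∈ B0, SX.neq b1 b0)
    (hA1 : ∀ x y, SX.eq x y → x ∈ A1 → y ∈ A1)
    (hA0 : ∀ x y, SX.eq x y → x ∈ A0 → y ∈ A0)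
    (hB1 : ∀ x y, SX.eq x y → x ∈ B1 → y ∈ B1)
    (hB0 : ∀ x y, SX.eq x y → x ∈ B0 → y ∈ B0) :
    (∀ y1 ∈ img SY f A1, ∀ y0 ∈ img SY f A0, SY.neq y1 y0) ∧
    img SY f (A1 ∩ B1) = img SY f A1 ∩ img SY f B1 ∧
    img SY f (A0 ∪ B0) = img SY f A0 ∪ img SY f B0 := by
  refine ⟨?_, ?_, ?_⟩
  · rintro y1 ⟨a1, ha1, he1⟩ y0 ⟨a0, ha0, he0⟩
    exact SY.ext he1 he0 (hinj _ _ (hAdisj a1 ha1 a0 ha0))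
  · ext y
    constructor
    · rintro ⟨a, ⟨haA, haB⟩, he⟩
      exact ⟨⟨a, haA, he⟩, ⟨a, haB, he⟩⟩
    · rintro ⟨⟨a, haA, hea⟩, ⟨b, hbB, heb⟩⟩
      have : SX.eq b a := hemb _ _ (SY.eq_trans heb (SY.eq_symm hea))
      exact ⟨a, ⟨haA, hB1 _ _ this hbB⟩, hea⟩
  · ext y
    constructor
    · rintro ⟨a, (h | h), he⟩
      exacts [Or.inl ⟨a, h, he⟩, Or.inr ⟨a, h, he⟩]
    · rintro (⟨a, h, he⟩ | ⟨a, h, he⟩)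
      exacts [⟨a, Or.inl h, he⟩, ⟨a, Or.inr h, he⟩]
end
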